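/- Full correctness of the recursive algorithm: if K_{M} = Ĝ_M⁻¹ A_M and the algorithm computes K_{M+1} via the Sherman–Morrison update of Ĝ_M⁻¹ together with A_{M+1} = A_M + ψᵀφ, then K_{M+1} = Ĝ_{M+1}⁻¹ A_{M+1}, where Ĝ_{M+1} = Ĝ_M + ψᵀψ. I.e., the recursively updated operator equals the batch-computed regularized Koopman operator. -/

import Mathlib

open Matrix

/-!
The recursive update is the Sherman–Morrison formula, i.e. the Woodbury identity
`(A + U C V)⁻¹ = A⁻¹ - A⁻¹ U (C⁻¹ + V A⁻¹ U)⁻¹ V A⁻¹` with `C = 1` of size `1 × 1`, where the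
inverted `1 × 1` matrix is the scalar `1 + ψ Ĝ⁻¹ ψᵀ`. That scalar is positive because `Ĝ⁻¹` is
positive definite, so the formula applies and the two sides agree already before multiplying
by `A_M + ψᵀ φ`.
-/

namespace Matrix

variable {n α : Type*} [Fintype n] [DecidableEq n] [Field α]

theorem inv_fin_one (M : Matrix (Fin 1) (Fin 1) α) :
    M⁻¹ = (M 0 0)⁻¹ • (1 : Matrix (Fin 1) (Fin 1) α) := by
  ext i j
  fin_cases i; fin_cases j
  simp

theorem add_mul_inv_eq_sub_smul {A : Matrix n n α} (hA : IsUnit A) (u : Matrix n (Fin 1) α)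
    (v : Matrix (Fin 1) n α) (huv : 1 + (v * A⁻¹ * u) 0 0 ≠ 0) :
    (A + u * v)⁻¹ = A⁻¹ - (1 + (v * A⁻¹ * u) 0 0)⁻¹ • (A⁻¹ * u * v * A⁻¹) := by
  have hunit : IsUnit (1⁻¹ + v * A⁻¹ * u) := by
    rw [inv_one, isUnit_iff_isUnit_det, det_unique]
    simpa using huv
  have woodbury := add_mul_mul_inv_eq_sub A u 1 v hA isUnit_one hunit
  rw [Matrix.mul_one, inv_one, inv_fin_one] at woodbury
  simp [woodbury, Matrix.mul_smul, Matrix.smul_mul, Matrix.mul_assoc]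

end Matrix

/-- Full correctness of the recursive algorithm: the Sherman–Morrison-updated operator
equals the batch-computed regularized Koopman operator. -/
theorem recursive_koopman_correct {K : ℕ} (Gm Am : Matrix (Fin K) (Fin K) ℝ)
    (hGm : Gm.PosDef) (ψ φ : Matrix (Fin 1) (Fin K) ℝ) :
    (Gm⁻¹ - (1 + (ψ * Gm⁻¹ * ψᵀ) 0 0)⁻¹ • (Gm⁻¹ * ψᵀ * ψ * Gm⁻¹)) * (Am + ψᵀ * φ)
      = (Gm + ψᵀ * ψ)⁻¹ * (Am + ψᵀ * φ) := by
  have hquad : 0 ≤ (ψ * Gm⁻¹ * ψᵀ) 0 0 := by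
    simpa [conjTranspose_eq_transpose_of_trivial] using
      (hGm.inv.posSemidef.mul_mul_conjTranspose_same ψ).diag_nonneg (i := 0)
  rw [add_mul_inv_eq_sub_smul hGm.isUnit ψᵀ ψ (by positivity)]
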